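/- Let π be a multiplicative abelian group, Λ = ℤ[π] its integral group ring with the involution x ↦ x̄ induced by g ↦ g⁻¹. Fix p ∈ ℤ and set q = 1 − 4p², θ = pq and λ = 2pq (regarded as integers in Λ). For g ∈ π put b = 2p·g + q·1 and s = p·1 − g in Λ. Then: (i) b̄·b + (s + s̄)·λ = 1 in Λ; and (ii) there exists w ∈ Λ such that b̄·θ·b + λ·s·λ = θ + (w − w̄). (These identities verify conditions (i)–(iii) of Lemma 4.3 for the triple t_g of Lemma 6.1, making t_g a boundary automorphism of the quadratic form (Λ, pq); in particular the 2×2 matrix [[b̄, 1],[−(s+s̄)λ, b]] has determinant 1 and [[b, −(s+s̄)],[λ, b̄]]·[[b̄, s+s̄],[−λ, b]] is the identity matrix.) -/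
import Mathlib


/- STATEMENT 4 (Lemma 6.1 via Lemma 4.3): with Λ = ℤ[π], q = 1 − 4p², θ = pq, λ = 2pq,
b = 2p·g + q, s = p − g, the identities making t_g a boundary automorphism of (Λ, pq):
(i) b̄b + (s+s̄)λ = 1, (ii) b̄θb + λsλ = θ modulo {w − w̄}; and in particular the matrix
[[b̄,1],[−(s+s̄)λ, b]] has determinant 1 and [[b,−(s+s̄)],[λ,b̄]]·[[b̄,s+s̄],[−λ,b]] = 1. -/

open Matrix

/-- The involution x ↦ x̄ of ℤ[π] induced by g ↦ g⁻¹. -/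
noncomputable def conjM (π : Type*) [CommGroup π] :
    MonoidAlgebra ℤ π →+* MonoidAlgebra ℤ π :=
  MonoidAlgebra.mapDomainRingHom ℤ (invMonoidHom : π →* π)

lemma conjM_of (π : Type*) [CommGroup π] (g : π) :
    conjM π (MonoidAlgebra.of ℤ π g) = MonoidAlgebra.of ℤ π g⁻¹ := by
  simp [conjM, MonoidAlgebra.mapDomainRingHom, MonoidAlgebra.of_apply,
    Finsupp.mapDomain_single, invMonoidHom]

theorem stmt4 (π : Type*) [CommGroup π] (p : ℤ) (g : π)
    (q θ lam b s : MonoidAlgebra ℤ π)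
    (hq : q = ((1 - 4 * p ^ 2 : ℤ) : MonoidAlgebra ℤ π))
    (hθ : θ = ((p * (1 - 4 * p ^ 2) : ℤ) : MonoidAlgebra ℤ π))
    (hlam : lam = ((2 * p * (1 - 4 * p ^ 2) : ℤ) : MonoidAlgebra ℤ π))
    (hb : b = ((2 * p : ℤ) : MonoidAlgebra ℤ π) * MonoidAlgebra.of ℤ π g + q)
    (hs : s = ((p : ℤ) : MonoidAlgebra ℤ π) - MonoidAlgebra.of ℤ π g) :
    conjM π b * b + (s + conjM π s) * lam = 1 ∧
    (∃ w : MonoidAlgebra ℤ π,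
      conjM π b * θ * b + lam * s * lam = θ + (w - conjM π w)) ∧
    (!![conjM π b, 1; -((s + conjM π s) * lam), b] : Matrix (Fin 2) (Fin 2) _).det = 1 ∧
    (!![b, -(s + conjM π s); lam, conjM π b] : Matrix (Fin 2) (Fin 2) _) *
      !![conjM π b, s + conjM π s; -lam, b] = 1 := by
  set x := MonoidAlgebra.of ℤ π g with hx
  set y := MonoidAlgebra.of ℤ π g⁻¹ with hy
  have hxy : x * y = 1 := by
    rw [hx, hy, ← _root_.map_mul, mul_inv_cancel, _root_.map_one]
  have hcb : conjM π b = ((2 * p : ℤ) : MonoidAlgebra ℤ π) * y + q := by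
    rw [hb, map_add, _root_.map_mul, map_intCast, conjM_of, hq, map_intCast]
  have hcs : conjM π s = ((p : ℤ) : MonoidAlgebra ℤ π) - y := by
    rw [hs, map_sub, map_intCast, conjM_of]
  have h1 : conjM π b * b + (s + conjM π s) * lam = 1 := by
    rw [hcb, hcs, hb, hs, hq, hlam]
    push_cast
    linear_combination (4 * (p : MonoidAlgebra ℤ π) ^ 2) * hxy
  refine ⟨h1, ⟨⟨2 * θ ^ 2 * s, ?_⟩, ?_, ?_⟩⟩
  · have hcθ : conjM π θ = θ := by rw [hθ, map_intCast]
    rw [_root_.map_mul, _root_.map_mul, map_pow, hcθ, map_ofNat, hcb, hcs, hb, hs, hθ, hlam, hq]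
    push_cast
    linear_combination (4 * (p : MonoidAlgebra ℤ π) ^ 3 * (1 - 4 * p ^ 2)) * hxy
  · rw [Matrix.det_fin_two_of]
    linear_combination h1
  · apply Matrix.ext
    intro i j
    fin_cases i <;> fin_cases j <;>
      simp [Matrix.mul_apply, Fin.sum_univ_two, Matrix.one_apply] <;>
      first
        | linear_combination h1
        | linear_combination -h1
        | ring
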